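/- On an almost Hermitian manifold with Levi-Civita connection ∇, set ∇^J_XY = −J∇_X(JY) and ∇̄ = ½(∇ + ∇^J). Then the symmetric products satisfy J((d^s_∇ J)(X,Y)) = ⟨X:Y⟩^∇ − ⟨X:Y⟩^{∇^J} and ⟨X:Y⟩^{∇̄} = ⟨X:Y⟩^∇ − ½J((d^s_∇ J)(X,Y)) for all vector fields X, Y; consequently, if (M,g,J) is nearly Kähler then ∇̄ = ∇ − ¼ J ∘ (d^a_∇ J) = ∇ − ⅛ N_J. -/
import Mathlib


variable {R : Type} [CommRing R] [Algebra ℝ R]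
variable {A : Type} [AddCommGroup A] [Module R A] [Module ℝ A] [IsScalarTower ℝ R A]

/-- The covariant derivative of the metric: `(Dg)(X,Y,Z) = X(g(Y,Z)) − g(D_XY,Z) − g(Y,D_XZ)`. -/
def covG (ρ : A → R → R) (g : A → A → R) (D : A → A → A) (X Y Z : A) : R :=
  ρ X (g Y Z) - g (D X Y) Z - g Y (D X Z)

/-- The connection `∇^J_X Y = −J ∇_X (JY)`. -/
def connJ (D : A → A → A) (J : A → A) (X Y : A) : A := - J (D X (J Y))

/-- The covariant derivative of `J`: `(D_X J)Y = D_X(JY) − J(D_X Y)`. -/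
def covJ (D : A → A → A) (J : A → A) (X Y : A) : A := D X (J Y) - J (D X Y)

/-- The first canonical Hermitian connection `∇̄ = ½(∇ + ∇^J)`. -/
noncomputable def barConn (D : A → A → A) (J : A → A) (X Y : A) : A :=
  (2 : ℝ)⁻¹ • (D X Y + connJ D J X Y)

/-- The alternation `(d^a_∇ J)(X,Y) = (∇_X J)Y − (∇_Y J)X`. -/
def daJ (D : A → A → A) (J : A → A) (X Y : A) : A := covJ D J X Y - covJ D J Y X

/-- The symmetrization `(d^s_∇ J)(X,Y) = (∇_X J)Y + (∇_Y J)X`. -/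
def dsJ (D : A → A → A) (J : A → A) (X Y : A) : A := covJ D J X Y + covJ D J Y X

/-- The Nijenhuis tensor. -/
def nijenhuis (br : A → A → A) (J : A → A) (X Y : A) : A :=
  J (br (J X) Y) + J (br X (J Y)) + br X Y - br (J X) (J Y)

/-- The torsion of a connection. -/
def Tor (br D : A → A → A) (X Y : A) : A := D X Y - D Y X - br X Y

/-- The symmetric product of a connection. -/
def symProd (D : A → A → A) (X Y : A) : A := D X Y + D Y X

/-- Symmetric products of `∇`, `∇^J` and `∇̄ = ½(∇ + ∇^J)`:
`J((d^s_∇ J)(X,Y)) = ⟨X:Y⟩^∇ − ⟨X:Y⟩^{∇^J}`,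
`⟨X:Y⟩^{∇̄} = ⟨X:Y⟩^∇ − ½ J((d^s_∇ J)(X,Y))`; hence in the nearly Kähler case
`∇̄ = ∇ − ¼ J∘(d^a_∇ J) = ∇ − ⅛ N_J`. -/
theorem symmetric_products_and_first_canonical_connection
    (ρ : A → R → R) (br : A → A → A)
    (hρ_add : ∀ X Y f, ρ (X + Y) f = ρ X f + ρ Y f)
    (hρ_smulR : ∀ (c : R) X f, ρ (c • X) f = c * ρ X f)
    (hρ_map_add : ∀ X f g, ρ X (f + g) = ρ X f + ρ X g)
    (hρ_map_smul : ∀ X (c : ℝ) f, ρ X (c • f) = c • ρ X f)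
    (hρ_deriv : ∀ X f g, ρ X (f * g) = f * ρ X g + g * ρ X f)
    (hbr_skew : ∀ X Y, br X Y = - br Y X)
    (hbr_addl : ∀ X Y Z, br (X + Y) Z = br X Z + br Y Z)
    (hbr_smul : ∀ (c : ℝ) X Y, br (c • X) Y = c • br X Y)
    (hbr_leib : ∀ X (f : R) Y, br X (f • Y) = f • br X Y + ρ X f • Y)
    (hbr_jacobi : ∀ X Y Z, br (br X Y) Z + br (br Z X) Y + br (br Y Z) X = 0)
    (hρ_br : ∀ X Y f, ρ (br X Y) f = ρ X (ρ Y f) - ρ Y (ρ X f))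
    (g : A → A → R)
    (hg_symm : ∀ X Y, g X Y = g Y X)
    (hg_addl : ∀ X Y Z, g (X + Y) Z = g X Z + g Y Z)
    (hg_smull : ∀ (f : R) X Z, g (f • X) Z = f * g X Z)
    (hg_nondeg : ∀ X Y, (∀ Z, g X Z = g Y Z) → X = Y)
    (J : A → A)
    (hJ_add : ∀ X Y, J (X + Y) = J X + J Y)
    (hJ_smul : ∀ (f : R) X, J (f • X) = f • J X)
    (hJ_sq : ∀ X, J (J X) = - X)
    (hJ_orth : ∀ X Y, g (J X) (J Y) = g X Y)
    (D : A → A → A)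
    (hD_addl : ∀ X Y Z, D (X + Y) Z = D X Z + D Y Z)
    (hD_smull : ∀ (f : R) X Y, D (f • X) Y = f • D X Y)
    (hD_addr : ∀ X Y Z, D X (Y + Z) = D X Y + D X Z)
    (hD_leib : ∀ X (f : R) Y, D X (f • Y) = f • D X Y + ρ X f • Y)
    (hD_torsion_free : ∀ X Y, D X Y - D Y X = br X Y)
    (hD_metric : ∀ Z X Y, ρ Z (g X Y) = g (D Z X) Y + g X (D Z Y))
    :
    (∀ X Y, J (dsJ D J X Y) = symProd D X Y - symProd (connJ D J) X Y) ∧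
    (∀ X Y, symProd (barConn D J) X Y
        = symProd D X Y - (2 : ℝ)⁻¹ • J (dsJ D J X Y)) ∧
    ((∀ X Y, dsJ D J X Y = 0) →
      ∀ X Y, barConn D J X Y = D X Y - (4 : ℝ)⁻¹ • J (daJ D J X Y) ∧
        barConn D J X Y = D X Y - (8 : ℝ)⁻¹ • nijenhuis br J X Y) := by
  -- basic consequences of additivity of `J`
  have hJ0 : J 0 = 0 := by
    have h := hJ_add 0 0
    rw [add_zero] at h
    exact (add_eq_left.mp h.symm)
  have hJneg : ∀ x, J (-x) = - J x := by
    intro x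
    have h := hJ_add x (-x)
    rw [add_neg_cancel, hJ0] at h
    exact eq_neg_of_add_eq_zero_right h.symm
  have hJsub : ∀ x y, J (x - y) = J x - J y := by
    intro x y
    rw [sub_eq_add_neg, hJ_add, hJneg, sub_eq_add_neg]
  have hJ_smulR : ∀ (c : ℝ) (x : A), J (c • x) = c • J x := by
    intro c x
    rw [← algebraMap_smul R c x, hJ_smul, algebraMap_smul]
  have hD0 : ∀ a, D a 0 = 0 := by
    intro a
    have h := hD_addr a 0 0
    rw [add_zero] at h
    exact (add_eq_left.mp h.symm)
  have hDneg : ∀ a b, D a (-b) = - D a b := by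
    intro a b
    have h := hD_addr a b (-b)
    rw [add_neg_cancel, hD0] at h
    exact eq_neg_of_add_eq_zero_right h.symm
  have hbrdef : ∀ a b, br a b = D a b - D b a := fun a b => (hD_torsion_free a b).symm
  have hDJ : ∀ a b, D a (J b) = covJ D J a b + J (D a b) := by
    intro a b
    unfold covJ
    abel
  have hJcov : ∀ a b, covJ D J a (J b) = - J (covJ D J a b) := by
    intro a b
    unfold covJ
    rw [hJ_sq, hDneg, hJsub, hJ_sq]
    abel
  have part1 : ∀ X Y, J (dsJ D J X Y) = symProd D X Y - symProd (connJ D J) X Y := by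
    intro X Y
    simp only [dsJ, covJ, symProd, connJ, hJ_add, hJsub, hJ_sq, hJneg]
    abel
  have part2 : ∀ X Y, symProd (barConn D J) X Y
      = symProd D X Y - (2 : ℝ)⁻¹ • J (dsJ D J X Y) := by
    intro X Y
    simp only [symProd, barConn, connJ, dsJ, covJ, hJ_add, hJsub, hJ_sq, hJneg]
    module
  refine ⟨part1, part2, ?_⟩
  intro h X Y
  have hds : ∀ a b, covJ D J a b + covJ D J b a = 0 := by
    intro a b
    have := h a b
    simpa [dsJ] using this
  have hanti : ∀ a b, covJ D J b a = - covJ D J a b := fun a b =>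
    eq_neg_of_add_eq_zero_right (hds a b)
  have hcovJl : ∀ a b, covJ D J (J a) b = - J (covJ D J a b) := by
    intro a b
    rw [hanti b (J a), hJcov b a, hanti a b, hJneg]
    simp
  have hbar : barConn D J X Y = D X Y - (2 : ℝ)⁻¹ • J (covJ D J X Y) := by
    simp only [barConn, connJ, covJ, hJsub, hJ_sq]
    module
  have key : daJ D J X Y = covJ D J X Y + covJ D J X Y := by
    unfold daJ
    rw [hanti X Y]
    abel
  have hN : nijenhuis br J X Y = (4 : ℝ) • J (covJ D J X Y) := by
    unfold nijenhuis
    simp only [hbrdef, hDJ, hcovJl, hJcov, hJ_add, hJsub, hJneg, hJ_sq]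
    rw [hanti X Y]
    simp only [hJneg]
    module
  constructor
  · rw [hbar, key, hJ_add]
    module
  · rw [hbar, hN]
    module
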